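/- ∑_{m,n≥0} q^{(3m²+m)/2 + 2mn + n² + 2m + 2n} / ((q;q)_m (q^4;q^4)_{⌊n/2⌋}) = ∑_{m,n≥0} q^{2m² + 2mn + n² + 2m + 2n} / ((q^2;q^2)_m (q^2;q^2)_n) as formal power series (or for |q| < 1). -/

import Mathlib

open Finset

/-- Finite q-Pochhammer symbol `(a; q)_n = ∏_{j=0}^{n-1} (1 - a q^j)`. -/
noncomputable def qPoch (a q : ℂ) (n : ℕ) : ℂ := ∏ j ∈ Finset.range n, (1 - a * q ^ j)

/-- Infinite q-Pochhammer symbol `(a; q)_∞`. -/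
noncomputable def qPochInf (a q : ℂ) : ℂ := ∏' j : ℕ, (1 - a * q ^ j)

/-- Gaussian binomial coefficient `[a choose b]_q`, equal to
`(q;q)_a / ((q;q)_b (q;q)_{a-b})` when `a ≥ b ≥ 0`, and `0` otherwise. -/
noncomputable def qbinom (q : ℂ) (a b : ℤ) : ℂ :=
  if 0 ≤ b ∧ b ≤ a then
    qPoch q q a.toNat / (qPoch q q b.toNat * qPoch q q (a - b).toNat)
  else 0

/-!
Grouping both double sums along the diagonals `m + n = N` pulls out the factor `q^(N² + 2N)`;
what remains are the coefficients of `X^N` in `(-qX; q)_∞ (1 + X) / (X²; q⁴)_∞` and in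
`(-qX; q²)_∞ / (X; q²)_∞`. Both power series `F` satisfy `(1 - X) F(X) = (1 + qX) F(q²X)` with
`F(0) = 1`, and for `q` not a root of unity this functional equation determines `F` coefficient
by coefficient. The infinite products are never formed: each factor enters only through its
coefficients and the functional equation they satisfy.
-/
open PowerSeries

theorem one_sub_pow_ne_zero_of_not_isOfFinOrder {R : Type*} [Ring R] {x : R}
    (hx : ¬IsOfFinOrder x) {n : ℕ} (hn : n ≠ 0) : 1 - x ^ n ≠ 0 :=
  sub_ne_zero.mpr fun h =>
    hx (isOfFinOrder_iff_pow_eq_one.mpr ⟨n, Nat.pos_of_ne_zero hn, h.symm⟩)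

section Uniqueness

variable {R : Type*} [CommRing R]

theorem coeff_succ_of_one_sub_X_mul_eq_mul_rescale {r c : R} {F : R⟦X⟧}
    (hF : (1 - X) * F = (1 + C c * X) * rescale r F) (n : ℕ) :
    (1 - r ^ (n + 1)) * coeff (n + 1) F = (1 + c * r ^ n) * coeff n F := by
  have h := congrArg (coeff (n + 1)) hF
  simp only [sub_mul, add_mul, one_mul, mul_assoc, map_sub, map_add, coeff_succ_X_mul,
    coeff_C_mul, coeff_rescale] at h
  linear_combination h

theorem eq_of_one_sub_X_mul_eq_mul_rescale [IsDomain R] {r c : R} (hr : ¬IsOfFinOrder r)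
    {F G : R⟦X⟧}
    (hF : (1 - X) * F = (1 + C c * X) * rescale r F)
    (hG : (1 - X) * G = (1 + C c * X) * rescale r G)
    (h0 : constantCoeff F = constantCoeff G) : F = G := by
  ext n
  induction n with
  | zero => simpa using h0
  | succ n ih =>
    refine mul_left_cancel₀ (one_sub_pow_ne_zero_of_not_isOfFinOrder hr n.succ_ne_zero) ?_
    rw [coeff_succ_of_one_sub_X_mul_eq_mul_rescale hF,
      coeff_succ_of_one_sub_X_mul_eq_mul_rescale hG, ih]

end Uniqueness

section QPochhammer

theorem qPoch_self_succ (x : ℂ) (n : ℕ) :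
    qPoch x x (n + 1) = qPoch x x n * (1 - x ^ (n + 1)) := by
  rw [qPoch, prod_range_succ, ← pow_succ']
  rfl

variable {x : ℂ}

theorem qPoch_self_ne_zero (hx : ¬IsOfFinOrder x) (n : ℕ) : qPoch x x n ≠ 0 :=
  prod_ne_zero_iff.mpr fun j _ => by
    rw [← pow_succ']
    exact one_sub_pow_ne_zero_of_not_isOfFinOrder hx j.succ_ne_zero

theorem inv_qPoch_self_eq (hx : ¬IsOfFinOrder x) (n : ℕ) :
    (qPoch x x n)⁻¹ = (1 - x ^ (n + 1)) * (qPoch x x (n + 1))⁻¹ := by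
  rw [qPoch_self_succ, mul_inv, mul_left_comm,
    mul_inv_cancel₀ (one_sub_pow_ne_zero_of_not_isOfFinOrder hx n.succ_ne_zero), mul_one]

end QPochhammer

/- As power series in `X`: `eulerSeries x z = (-zX; x)_∞` (Euler),
`invQPochSeries x = 1 / (X; x)_∞` and `floorHalfSeries y = (1 + X) / (X²; y²)_∞`. -/
noncomputable def eulerSeries (x z : ℂ) : ℂ⟦X⟧ :=
  mk fun m => x ^ m.choose 2 * z ^ m / qPoch x x m

noncomputable def invQPochSeries (x : ℂ) : ℂ⟦X⟧ :=
  mk fun n => (qPoch x x n)⁻¹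

noncomputable def floorHalfSeries (y : ℂ) : ℂ⟦X⟧ :=
  mk fun n => (qPoch (y ^ 2) (y ^ 2) (n / 2))⁻¹

section FunctionalEquations

variable {x : ℂ} (hx : ¬IsOfFinOrder x)
include hx

theorem eulerSeries_eq_mul_rescale (z : ℂ) :
    eulerSeries x z = (1 + C z * X) * rescale x (eulerSeries x z) := by
  ext (_ | n)
  · simp only [eulerSeries, add_mul, one_mul, mul_assoc, map_add, coeff_zero_X_mul,
      coeff_C_mul, coeff_rescale, coeff_mk]
    simp
  · have hP := qPoch_self_ne_zero hx n
    have h1 := one_sub_pow_ne_zero_of_not_isOfFinOrder hx n.succ_ne_zero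
    simp only [eulerSeries, add_mul, one_mul, mul_assoc, map_add, coeff_succ_X_mul,
      coeff_C_mul, coeff_rescale, coeff_mk, qPoch_self_succ, Nat.choose_succ_succ',
      Nat.choose_one_right]
    field_simp
    ring

theorem one_sub_X_mul_invQPochSeries :
    (1 - X) * invQPochSeries x = rescale x (invQPochSeries x) := by
  ext (_ | n)
  · simp [invQPochSeries]
  · simp only [invQPochSeries, sub_mul, one_mul, map_sub, coeff_succ_X_mul, coeff_rescale,
      coeff_mk, inv_qPoch_self_eq hx n]
    ring

end FunctionalEquations

theorem one_sub_X_mul_one_add_mul_floorHalfSeries {y : ℂ} (hy : ¬IsOfFinOrder y) :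
    (1 - X) * ((1 + C y * X) * floorHalfSeries y) = rescale y (floorHalfSeries y) := by
  have hy2 : ¬IsOfFinOrder (y ^ 2) := fun h => hy (h.of_pow two_ne_zero)
  ext (_ | _ | n)
  · simp [floorHalfSeries]
  · simp [floorHalfSeries, qPoch, sub_mul, add_mul, mul_assoc, coeff_succ_X_mul, coeff_rescale]
  · simp only [floorHalfSeries, sub_mul, add_mul, one_mul, mul_assoc, map_sub, map_add,
      coeff_succ_X_mul, coeff_C_mul, coeff_rescale, coeff_mk]
    obtain ⟨k, rfl | rfl⟩ := n.even_or_odd'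
    · rw [show (2 * k + 1 + 1) / 2 = k + 1 by omega, show (2 * k + 1) / 2 = k by omega,
        show 2 * k / 2 = k by omega, inv_qPoch_self_eq hy2 k]
      ring
    · rw [show (2 * k + 1 + 1 + 1) / 2 = k + 1 by omega, show (2 * k + 1 + 1) / 2 = k + 1 by omega,
        show (2 * k + 1) / 2 = k by omega, inv_qPoch_self_eq hy2 k]
      ring

theorem eulerSeries_mul_floorHalfSeries {q : ℂ} (hq : ¬IsOfFinOrder q) :
    eulerSeries q q * floorHalfSeries (q ^ 2) = eulerSeries (q ^ 2) q * invQPochSeries (q ^ 2) := by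
  have hq2 : ¬IsOfFinOrder (q ^ 2) := fun h => hq (h.of_pow two_ne_zero)
  have hA := eulerSeries_eq_mul_rescale hq q
  have hA2 : eulerSeries q q
      = (1 + C q * X) * ((1 + C (q ^ 2) * X) * rescale (q ^ 2) (eulerSeries q q)) := by
    have hCq : rescale q (C q) = C q := by
      ext (_ | n) <;> simp [coeff_C, coeff_rescale]
    have h := congrArg (rescale q) hA
    rw [map_mul, map_add, map_one, map_mul, hCq, rescale_X, rescale_rescale, ← mul_assoc,
      ← map_mul, ← sq] at h
    rw [← h, ← hA]
  have hV := one_sub_X_mul_one_add_mul_floorHalfSeries hq2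
  have hC := eulerSeries_eq_mul_rescale hq2 q
  have hD := one_sub_X_mul_invQPochSeries hq2
  refine eq_of_one_sub_X_mul_eq_mul_rescale hq2 (c := q) ?_ ?_ ?_
  · rw [map_mul, ← hV]
    linear_combination ((1 - X) * floorHalfSeries (q ^ 2)) * hA2
  · rw [map_mul]
    linear_combination eulerSeries (q ^ 2) q * hD
      + rescale (q ^ 2) (invQPochSeries (q ^ 2)) * hC
  · simp [eulerSeries, floorHalfSeries, invQPochSeries, qPoch]

theorem Summable.tsum_eq_tsum_sum_antidiagonal {A α : Type*} [AddCommMonoid A]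
    [HasAntidiagonal A] [AddCommMonoid α] [TopologicalSpace α] [ContinuousAdd α] [T3Space α]
    {f : A × A → α}
    (hf : Summable f) : ∑' p, f p = ∑' n, ∑ p ∈ antidiagonal n, f p := by
  let e := HasAntidiagonal.sigmaAntidiagonalEquivProd (A := A)
  calc ∑' p, f p = ∑' x, f (e x) := (e.tsum_eq f).symm
    _ = ∑' n, ∑' c : antidiagonal n, f c :=
        Summable.tsum_sigma' (f := fun x => f (e x)) (fun _ => (hasSum_fintype _).summable)
          (e.summable_iff.mpr hf)
    _ = ∑' n, ∑ p ∈ antidiagonal n, f p := tsum_congr fun n => Finset.tsum_subtype _ f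

theorem summable_pow_sq_mul_pow {ρ : ℝ} (hρ0 : 0 ≤ ρ) (hρ : ρ < 1) (K : ℝ) :
    Summable fun k : ℕ => ρ ^ (k ^ 2) * K ^ k := by
  have hsmall : ∀ᶠ k : ℕ in Filter.atTop, ρ ^ k * |K| ≤ 1 / 2 := by
    have h := (tendsto_pow_atTop_nhds_zero_of_lt_one hρ0 hρ).mul_const |K|
    rw [zero_mul] at h
    exact h.eventually_le_const (by norm_num)
  refine Summable.of_norm_bounded_eventually_nat summable_geometric_two ?_
  filter_upwards [hsmall] with k hk
  rw [norm_mul, norm_pow, norm_pow, Real.norm_of_nonneg hρ0, Real.norm_eq_abs, sq, pow_mul,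
    ← mul_pow]
  exact pow_le_pow_left₀ (by positivity) hk k

theorem norm_inv_qPoch_self_le {x : ℂ} {ρ : ℝ} (hx : ‖x‖ ≤ ρ) (hρ : ρ < 1) (m : ℕ) :
    ‖(qPoch x x m)⁻¹‖ ≤ (1 - ρ)⁻¹ ^ m := by
  rw [norm_inv, inv_pow]
  refine inv_anti₀ (pow_pos (by linarith) m) ?_
  rw [qPoch, norm_prod,
    show (1 - ρ) ^ m = ∏ _j ∈ range m, (1 - ρ) by rw [prod_const, card_range]]
  refine prod_le_prod (fun _ _ => by linarith) fun j _ => ?_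
  calc 1 - ρ ≤ ‖(1 : ℂ)‖ - ‖x * x ^ j‖ := by
        rw [norm_one, ← pow_succ', norm_pow]
        linarith [pow_le_of_le_one (n := j + 1) (norm_nonneg x) (hx.trans hρ.le) (by omega)]
    _ ≤ ‖1 - x * x ^ j‖ := norm_sub_norm_le _ _

theorem summable_pow_div_mul {q : ℂ} (hq : ‖q‖ < 1) {E : ℕ × ℕ → ℕ} {P Q : ℕ × ℕ → ℂ}
    (hE : ∀ p, (p.1 + p.2) ^ 2 ≤ E p)
    (hP : ∀ p, ‖(P p)⁻¹‖ ≤ (1 - ‖q‖)⁻¹ ^ p.1) (hQ : ∀ p, ‖(Q p)⁻¹‖ ≤ (1 - ‖q‖)⁻¹ ^ p.2) :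
    Summable fun p => q ^ E p / (P p * Q p) := by
  set ρ := ‖q‖
  set g := fun k : ℕ => ρ ^ (k ^ 2) * (1 - ρ)⁻¹ ^ k
  have hg0 : ∀ k, 0 ≤ g k := fun k => by have : ρ < 1 := hq; positivity
  have hg := summable_pow_sq_mul_pow (norm_nonneg q) hq (1 - ρ)⁻¹
  refine Summable.of_norm_bounded (hg.mul_of_nonneg hg hg0 hg0) fun p => ?_
  have hsq : p.1 ^ 2 + p.2 ^ 2 ≤ (p.1 + p.2) ^ 2 := by
    rw [add_sq]
    exact Nat.add_le_add_right (Nat.le_add_right _ _) _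
  have hρE : ρ ^ E p ≤ ρ ^ (p.1 ^ 2) * ρ ^ (p.2 ^ 2) := by
    rw [← pow_add]
    exact pow_le_pow_of_le_one (norm_nonneg q) hq.le (hsq.trans (hE p))
  calc ‖q ^ E p / (P p * Q p)‖ = ρ ^ E p * (‖(P p)⁻¹‖ * ‖(Q p)⁻¹‖) := by
        rw [div_eq_mul_inv, mul_inv, norm_mul, norm_mul, norm_pow]
    _ ≤ ρ ^ (p.1 ^ 2) * ρ ^ (p.2 ^ 2) * ((1 - ρ)⁻¹ ^ p.1 * (1 - ρ)⁻¹ ^ p.2) := by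
        gcongr
        exacts [hP p, hQ p]
    _ = g p.1 * g p.2 := by ring

theorem sq_eq_two_mul_choose_two_add (m : ℕ) : m ^ 2 = 2 * m.choose 2 + m := by
  induction m with
  | zero => rfl
  | succ m ih =>
    rw [Nat.choose_succ_succ', Nat.choose_one_right]
    linarith

theorem lhs_exponent_eq (m n : ℕ) :
    (3 * m ^ 2 + m) / 2 + 2 * m * n + n ^ 2 + 2 * m + 2 * n
      = (m + n) ^ 2 + 2 * (m + n) + (m.choose 2 + m) := by
  have hdiv : (3 * m ^ 2 + m) / 2 = m ^ 2 + (m.choose 2 + m) := by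
    rw [sq_eq_two_mul_choose_two_add m]
    omega
  rw [hdiv]
  ring

theorem rhs_exponent_eq (m n : ℕ) :
    2 * m ^ 2 + 2 * m * n + n ^ 2 + 2 * m + 2 * n
      = (m + n) ^ 2 + 2 * (m + n) + (2 * m.choose 2 + m) := by
  linarith [sq_eq_two_mul_choose_two_add m]

theorem lhs_term_eq (q : ℂ) (m n : ℕ) :
    q ^ ((3 * m ^ 2 + m) / 2 + 2 * m * n + n ^ 2 + 2 * m + 2 * n)
        / (qPoch q q m * qPoch (q ^ 4) (q ^ 4) (n / 2))
      = q ^ ((m + n) ^ 2 + 2 * (m + n))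
          * (coeff m (eulerSeries q q) * coeff n (floorHalfSeries (q ^ 2))) := by
  rw [eulerSeries, floorHalfSeries, coeff_mk, coeff_mk, ← pow_mul, lhs_exponent_eq, pow_add,
    pow_add]
  ring

theorem rhs_term_eq (q : ℂ) (m n : ℕ) :
    q ^ (2 * m ^ 2 + 2 * m * n + n ^ 2 + 2 * m + 2 * n)
        / (qPoch (q ^ 2) (q ^ 2) m * qPoch (q ^ 2) (q ^ 2) n)
      = q ^ ((m + n) ^ 2 + 2 * (m + n))
          * (coeff m (eulerSeries (q ^ 2) q) * coeff n (invQPochSeries (q ^ 2))) := by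
  rw [eulerSeries, invQPochSeries, coeff_mk, coeff_mk, ← pow_mul, rhs_exponent_eq, pow_add,
    pow_add]
  ring

section Convergence

variable {q : ℂ} (hq : ‖q‖ < 1)
include hq

theorem norm_pow_le_norm {k : ℕ} (hk : k ≠ 0) : ‖q ^ k‖ ≤ ‖q‖ := by
  rw [norm_pow]
  exact pow_le_of_le_one (norm_nonneg q) hq.le hk

theorem summable_lhs :
    Summable fun p : ℕ × ℕ =>
      q ^ ((3 * p.1 ^ 2 + p.1) / 2 + 2 * p.1 * p.2 + p.2 ^ 2 + 2 * p.1 + 2 * p.2)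
        / (qPoch q q p.1 * qPoch (q ^ 4) (q ^ 4) (p.2 / 2)) := by
  have hK : 1 ≤ (1 - ‖q‖)⁻¹ := one_le_inv₀ (by linarith) |>.mpr (by linarith [norm_nonneg q])
  refine summable_pow_div_mul hq (fun p => ?_) (fun p => norm_inv_qPoch_self_le le_rfl hq _)
    fun p => (norm_inv_qPoch_self_le (norm_pow_le_norm hq four_ne_zero) hq _).trans
      (pow_le_pow_right₀ hK (Nat.div_le_self _ _))
  rw [lhs_exponent_eq]
  exact (Nat.le_add_right _ _).trans (Nat.le_add_right _ _)

theorem summable_rhs :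
    Summable fun p : ℕ × ℕ =>
      q ^ (2 * p.1 ^ 2 + 2 * p.1 * p.2 + p.2 ^ 2 + 2 * p.1 + 2 * p.2)
        / (qPoch (q ^ 2) (q ^ 2) p.1 * qPoch (q ^ 2) (q ^ 2) p.2) := by
  have hq2 := norm_pow_le_norm hq two_ne_zero
  refine summable_pow_div_mul hq (fun p => ?_) (fun p => norm_inv_qPoch_self_le hq2 hq _)
    fun p => norm_inv_qPoch_self_le hq2 hq _
  rw [rhs_exponent_eq]
  exact (Nat.le_add_right _ _).trans (Nat.le_add_right _ _)

theorem tsum_lhs_eq :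
    ∑' p : ℕ × ℕ,
        q ^ ((3 * p.1 ^ 2 + p.1) / 2 + 2 * p.1 * p.2 + p.2 ^ 2 + 2 * p.1 + 2 * p.2)
          / (qPoch q q p.1 * qPoch (q ^ 4) (q ^ 4) (p.2 / 2))
      = ∑' N : ℕ, q ^ (N ^ 2 + 2 * N) * coeff N (eulerSeries q q * floorHalfSeries (q ^ 2)) := by
  rw [(summable_lhs hq).tsum_eq_tsum_sum_antidiagonal]
  refine tsum_congr fun N => ?_
  rw [coeff_mul, mul_sum]
  exact sum_congr rfl fun p hp => by rw [lhs_term_eq, mem_antidiagonal.mp hp]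

theorem tsum_rhs_eq :
    ∑' p : ℕ × ℕ,
        q ^ (2 * p.1 ^ 2 + 2 * p.1 * p.2 + p.2 ^ 2 + 2 * p.1 + 2 * p.2)
          / (qPoch (q ^ 2) (q ^ 2) p.1 * qPoch (q ^ 2) (q ^ 2) p.2)
      = ∑' N : ℕ,
          q ^ (N ^ 2 + 2 * N) * coeff N (eulerSeries (q ^ 2) q * invQPochSeries (q ^ 2)) := by
  rw [(summable_rhs hq).tsum_eq_tsum_sum_antidiagonal]
  refine tsum_congr fun N => ?_
  rw [coeff_mul, mul_sum]
  exact sum_congr rfl fun p hp => by rw [rhs_term_eq, mem_antidiagonal.mp hp]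

end Convergence

/-- second Göllnitz–Gordon double-sum comparison (limit `N → ∞`). -/
theorem stmt7 (q : ℂ) (hq : ‖q‖ < 1) :
    ∑' p : ℕ × ℕ,
        q ^ ((3 * p.1 ^ 2 + p.1) / 2 + 2 * p.1 * p.2 + p.2 ^ 2 + 2 * p.1 + 2 * p.2)
        / (qPoch q q p.1 * qPoch (q ^ 4) (q ^ 4) (p.2 / 2))
      = ∑' p : ℕ × ℕ,
          q ^ (2 * p.1 ^ 2 + 2 * p.1 * p.2 + p.2 ^ 2 + 2 * p.1 + 2 * p.2)
          / (qPoch (q ^ 2) (q ^ 2) p.1 * qPoch (q ^ 2) (q ^ 2) p.2) := by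
  have hq' : ¬IsOfFinOrder q := fun h => hq.ne h.norm_eq_one
  rw [tsum_lhs_eq hq, tsum_rhs_eq hq, eulerSeries_mul_floorHalfSeries hq']
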